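/- arXiv:2008.02464 — 5 statements merged into one kernel-verified Lean document; each statement's English description precedes it below -/
import Mathlib

section
/- Let P be a regular Markov chain on state space [n] with stationary distribution π, let T ≥ 1, and let S, Q, σ be the induced state space, Markov chain, and stationary distribution as above. Let φ be a probability vector on [n] and define ρ on S by ρ_{(u_0,…,u_T)} = φ_{u_0}·P_{u_0,u_1}·⋯·P_{u_{T−1},u_T}. Then: (1) for every L > T and every trajectory (v_1,…,v_L) ∈ [n]^L with ∏_{i=1}^{L−1} P_{v_i,v_{i+1}} > 0, setting X_i := (v_i,v_{i+1},…,v_{i+T}) ∈ S for 1 ≤ i ≤ L−T, one has φ_{v_1}·∏_{i=1}^{L−1} P_{v_i,v_{i+1}} = ρ_{X_1}·∏_{i=1}^{L−T−1} Q_{X_i,X_{i+1}}; and (2) ‖ρ‖_σ = ‖φ‖_π, where ‖ρ‖_σ² = Σ_{s∈S} ρ_s²/σ_s and ‖φ‖_π² = Σ_{u∈[n]} φ_u²/π_u. -/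
open scoped BigOperators Kronecker ComplexOrder
open Matrix

/-- A (row-stochastic) Markov chain on a finite state space: nonnegative entries, rows sum to 1. -/
def IsMarkov {S : Type*} [Fintype S] (P : Matrix S S ℝ) : Prop :=
  (∀ i j, 0 ≤ P i j) ∧ ∀ i, ∑ j, P i j = 1

/-- A Markov chain is regular if some positive power has all entries strictly positive. -/
def IsRegularMC {S : Type*} [Fintype S] [DecidableEq S] (P : Matrix S S ℝ) : Prop :=
  ∃ k : ℕ, 0 < k ∧ ∀ i j, 0 < (P ^ k) i j

/-- `π` is a stationary distribution of `P`: strictly positive entries, sums to 1, `πᵀ P = πᵀ`. -/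
def IsStationaryMC {S : Type*} [Fintype S] (P : Matrix S S ℝ) (π : S → ℝ) : Prop :=
  (∀ i, 0 < π i) ∧ (∑ i, π i = 1) ∧ ∀ j, ∑ i, π i * P i j = π j

/-- A probability vector. -/
def IsProbVec {S : Type*} [Fintype S] (φ : S → ℝ) : Prop :=
  (∀ i, 0 ≤ φ i) ∧ ∑ i, φ i = 1

/-- The `π`-norm of a real vector `φ`: `‖φ‖_π = sqrt (∑ i, φ i ^ 2 / π i)`. -/
noncomputable def piNormR {S : Type*} [Fintype S] (π φ : S → ℝ) : ℝ :=
  Real.sqrt (∑ i, φ i ^ 2 / π i)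

/-- The `π`-inner product `⟨x, y⟩_π = y* Π⁻¹ x` on `ℂ^S`. -/
noncomputable def piInner {S : Type*} [Fintype S] (π : S → ℝ) (x y : S → ℂ) : ℂ :=
  ∑ i, (starRingEnd ℂ) (y i) * x i / (π i : ℂ)

/-- The `π`-norm of a complex vector. -/
noncomputable def piNorm {S : Type*} [Fintype S] (π : S → ℝ) (x : S → ℂ) : ℝ :=
  Real.sqrt (∑ i, ‖x i‖ ^ 2 / π i)

/-- The spectral expansion `λ(P)`: the supremum of `‖Pᵀ x‖_π / ‖x‖_π` over nonzero `x`
with `⟨x, π⟩_π = 0`. -/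
noncomputable def specExp {S : Type*} [Fintype S] (P : Matrix S S ℝ) (π : S → ℝ) : ℝ :=
  sSup {r : ℝ | ∃ x : S → ℂ, x ≠ 0 ∧ piInner π x (fun i => (π i : ℂ)) = 0 ∧
    r = piNorm π ((P.map Complex.ofReal)ᵀ *ᵥ x) / piNorm π x}

/-- The spectral (operator 2-)norm of a matrix. -/
noncomputable def spectralNormR {𝕜 : Type*} [RCLike 𝕜] {m n : Type*} [Fintype m] [Fintype n]
    (A : Matrix m n 𝕜) : ℝ :=
  sSup {r : ℝ | ∃ x : n → 𝕜, x ≠ 0 ∧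
    r = Real.sqrt (∑ i, ‖(A *ᵥ x) i‖ ^ 2) / Real.sqrt (∑ j, ‖x j‖ ^ 2)}

/-- The probability that a `k`-step random walk on `P` started from `φ` follows the
trajectory `v`, i.e. `φ (v 1) * ∏ j, P (v j) (v (j+1))`. -/
noncomputable def walkWeight {S : Type*} [Fintype S] (P : Matrix S S ℝ) (φ : S → ℝ)
    {k : ℕ} (v : Fin k → S) : ℝ :=
  if h : 0 < k then
    φ (v ⟨0, h⟩) * ∏ j : Fin (k - 1),
      P (v ⟨(j : ℕ), by have := j.isLt; omega⟩) (v ⟨(j : ℕ) + 1, by have := j.isLt; omega⟩)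
  else 0

/-- The probability of an event `E` under a `k`-step random walk on `P` started from `φ`. -/
noncomputable def walkProb {S : Type*} [Fintype S] (P : Matrix S S ℝ) (φ : S → ℝ)
    {k : ℕ} (E : Set (Fin k → S)) : ℝ :=
  ∑ v : Fin k → S, E.indicator (fun u => walkWeight P φ u) v

/-- The state space `S` of the induced chain: all `(T+1)`-windows `(u_0, …, u_T)` on `[n]`
whose transitions all have positive probability under `P`. -/
def windowSpace {n : ℕ} (P : Matrix (Fin n) (Fin n) ℝ) (T : ℕ) : Type :=
  {u : Fin (T + 1) → Fin n // 0 < ∏ i : Fin T, P (u i.castSucc) (u i.succ)}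

instance {n : ℕ} (P : Matrix (Fin n) (Fin n) ℝ) (T : ℕ) : Finite (windowSpace P T) :=
  inferInstanceAs (Finite {u : Fin (T + 1) → Fin n //
    0 < ∏ i : Fin T, P (u i.castSucc) (u i.succ)})

noncomputable instance {n : ℕ} (P : Matrix (Fin n) (Fin n) ℝ) (T : ℕ) :
    Fintype (windowSpace P T) := Fintype.ofFinite _

noncomputable instance {n : ℕ} (P : Matrix (Fin n) (Fin n) ℝ) (T : ℕ) :
    DecidableEq (windowSpace P T) := Classical.decEq _

/-- The induced Markov chain `Q` on windows:
`Q_{(u_0,…,u_T),(w_0,…,w_T)} = P_{u_T, w_T}` if `(u_1,…,u_T) = (w_0,…,w_{T-1})`, else `0`. -/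
noncomputable def inducedQ {n : ℕ} (P : Matrix (Fin n) (Fin n) ℝ) (T : ℕ) :
    Matrix (windowSpace P T) (windowSpace P T) ℝ :=
  Matrix.of fun u w =>
    if ∀ i : Fin T, u.1 i.succ = w.1 i.castSucc then
      P (u.1 (Fin.last T)) (w.1 (Fin.last T))
    else 0

/-- The induced stationary distribution:
`σ_{(u_0,…,u_T)} = π_{u_0} P_{u_0,u_1} ⋯ P_{u_{T-1},u_T}`. -/
noncomputable def inducedSigma {n : ℕ} (P : Matrix (Fin n) (Fin n) ℝ) (π : Fin n → ℝ)
    (T : ℕ) : windowSpace P T → ℝ :=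
  fun u => π (u.1 0) * ∏ i : Fin T, P (u.1 i.castSucc) (u.1 i.succ)

/-- The induced initial distribution `ρ` on windows:
`ρ_{(u_0,…,u_T)} = φ_{u_0} P_{u_0,u_1} ⋯ P_{u_{T-1},u_T}`. -/
noncomputable def inducedRho {n : ℕ} (P : Matrix (Fin n) (Fin n) ℝ) (φ : Fin n → ℝ)
    (T : ℕ) : windowSpace P T → ℝ :=
  fun u => φ (u.1 0) * ∏ i : Fin T, P (u.1 i.castSucc) (u.1 i.succ)

/-! Consecutive windows of a trajectory overlap in `T` states, so the weight of the trajectory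
factors as the weight `ρ` of its first window times one transition of `P` per later step, and each
such transition is the corresponding entry of `Q`. For the norms, on a window
`ρ_u² / σ_u = (φ_{u_0}² / π_{u_0}) · P_{u_0,u_1} ⋯ P_{u_{T-1},u_T}`; the paths outside `S` have
weight zero, and summing out `u_T, …, u_1` (rows of `P` sum to one) leaves `∑_a φ_a² / π_a`. -/

lemma Fin.prod_univ_pred_eq_prod_range {α M : Type*} [CommMonoid M] {L : ℕ} [NeZero L]
    (F : α → α → M) (v : Fin L → α) :
    ∏ i : Fin (L - 1), F (v ⟨i, by omega⟩) (v ⟨i + 1, by omega⟩) =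
      ∏ k ∈ Finset.range (L - 1), F (v (Fin.ofNat L k)) (v (Fin.ofNat L (k + 1))) := by
  rw [← Fin.prod_univ_eq_prod_range fun k => F (v (Fin.ofNat L k)) (v (Fin.ofNat L (k + 1)))]
  refine Finset.prod_congr rfl fun i _ => ?_
  congr 2 <;> ext <;> simp only [Fin.val_ofNat] <;> rw [Nat.mod_eq_of_lt] <;> omega

section PathWeight

open Finset

variable {S : Type*} (P : Matrix S S ℝ)

def pathWeight {T : ℕ} (u : Fin (T + 1) → S) : ℝ :=
  ∏ i : Fin T, P (u i.castSucc) (u i.succ)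

variable {P}

lemma pathWeight_nonneg (hP : ∀ i j, 0 ≤ P i j) {T : ℕ} (u : Fin (T + 1) → S) :
    0 ≤ pathWeight P u :=
  prod_nonneg fun _ _ => hP _ _

lemma pathWeight_cons {T : ℕ} (a : S) (u : Fin (T + 1) → S) :
    pathWeight P (Fin.cons a u : Fin (T + 2) → S) = P a (u 0) * pathWeight P u := by
  simp only [pathWeight, Fin.prod_univ_succ, Fin.castSucc_zero, Fin.cons_zero, ← Fin.succ_castSucc,
    Fin.cons_succ]

lemma sum_mul_pathWeight [Fintype S] (hrow : ∀ i, ∑ j, P i j = 1) (T : ℕ) (g : S → ℝ) :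
    ∑ u : Fin (T + 1) → S, g (u 0) * pathWeight P u = ∑ a, g a := by
  induction T generalizing g with
  | zero =>
    simp only [pathWeight, univ_eq_empty, prod_empty, mul_one]
    exact Fintype.sum_equiv (Equiv.funUnique (Fin 1) S) _ _ fun _ => rfl
  | succ T ih =>
    rw [← (Fin.consEquiv fun _ : Fin (T + 2) => S).sum_comp, Fintype.sum_prod_type]
    calc ∑ a, ∑ u : Fin (T + 1) → S, g a * pathWeight P (Fin.cons a u : Fin (T + 2) → S)
        = ∑ a, ∑ b, g a * P a b := sum_congr rfl fun a _ => by
          simpa only [pathWeight_cons, ← mul_assoc] using ih fun b => g a * P a b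
      _ = ∑ a, g a := by simp only [← mul_sum, hrow, mul_one]

end PathWeight

section InducedChain

open Finset

variable {n T : ℕ} {P : Matrix (Fin n) (Fin n) ℝ}

lemma inducedRho_sq_div_inducedSigma (π φ : Fin n → ℝ) (u : windowSpace P T) :
    inducedRho P φ T u ^ 2 / inducedSigma P π T u =
      φ (u.1 0) ^ 2 / π (u.1 0) * pathWeight P u.1 := by
  have hw : pathWeight P u.1 ≠ 0 := u.2.ne'
  change (φ (u.1 0) * pathWeight P u.1) ^ 2 / (π (u.1 0) * pathWeight P u.1) = _
  rw [mul_pow, sq (pathWeight P u.1), ← mul_assoc, mul_div_mul_right _ _ hw, mul_div_right_comm]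

lemma sum_windowSpace_mul_pathWeight (hP : ∀ i j, 0 ≤ P i j) (F : (Fin (T + 1) → Fin n) → ℝ) :
    ∑ u : windowSpace P T, F u.1 * pathWeight P u.1 = ∑ u, F u * pathWeight P u := by
  calc ∑ u : windowSpace P T, F u.1 * pathWeight P u.1
      = ∑ u with 0 < pathWeight P u, F u * pathWeight P u :=
        (sum_subtype (p := fun u => 0 < pathWeight P u) _ (by simp)
          fun u => F u * pathWeight P u).symm
    _ = ∑ u, F u * pathWeight P u := sum_filter_of_ne fun u _ hu =>
      (pathWeight_nonneg hP u).lt_of_ne' (right_ne_zero_of_mul hu)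

lemma inducedQ_apply_of_shift {u w : windowSpace P T}
    (h : ∀ i : Fin T, u.1 i.succ = w.1 i.castSucc) :
    inducedQ P T u w = P (u.1 (Fin.last T)) (w.1 (Fin.last T)) :=
  if_pos h

lemma inducedRho_mul_prod_inducedQ (φ : Fin n → ℝ) (x : ℕ → Fin n) (X : ℕ → windowSpace P T)
    (m : ℕ) (hX : ∀ i ≤ m, ∀ j : Fin (T + 1), (X i).1 j = x (i + j)) :
    inducedRho P φ T (X 0) * ∏ i ∈ range m, inducedQ P T (X i) (X (i + 1)) =
      φ (x 0) * ∏ k ∈ range (T + m), P (x k) (x (k + 1)) := by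
  have hρ : inducedRho P φ T (X 0) = φ (x 0) * ∏ k ∈ range T, P (x k) (x (k + 1)) := by
    simp only [inducedRho, hX 0 m.zero_le,
      ← Fin.prod_univ_eq_prod_range fun k => P (x k) (x (k + 1)), Fin.val_zero, Fin.val_castSucc,
      Fin.val_succ, zero_add]
  have hQ : ∀ i ∈ range m, inducedQ P T (X i) (X (i + 1)) = P (x (T + i)) (x (T + i + 1)) := by
    intro i hi
    have hi : i + 1 ≤ m := mem_range.mp hi
    rw [inducedQ_apply_of_shift fun j => by
      rw [hX i (by omega), hX (i + 1) hi, Fin.val_succ, Fin.val_castSucc, add_assoc, add_comm 1],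
      hX i (by omega), hX (i + 1) hi, Fin.val_last]
    congr 2 <;> omega
  rw [hρ, prod_congr rfl hQ, prod_range_add, mul_assoc]

end InducedChain

theorem stmt_5 {n T : ℕ}
    (P : Matrix (Fin n) (Fin n) ℝ) (π φ : Fin n → ℝ)
    (hP : IsMarkov P) :
    (∀ (L : ℕ) (hL : T < L) (v : Fin L → Fin n),
      0 < (∏ i : Fin (L - 1),
          P (v ⟨(i : ℕ), by have := i.isLt; omega⟩)
            (v ⟨(i : ℕ) + 1, by have := i.isLt; omega⟩)) →
      ∀ X : Fin (L - T) → windowSpace P T,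
        (∀ (i : Fin (L - T)) (j : Fin (T + 1)),
          (X i).1 j = v ⟨(i : ℕ) + (j : ℕ), by have := i.isLt; have := j.isLt; omega⟩) →
        φ (v ⟨0, by omega⟩) * (∏ i : Fin (L - 1),
            P (v ⟨(i : ℕ), by have := i.isLt; omega⟩)
              (v ⟨(i : ℕ) + 1, by have := i.isLt; omega⟩)) =
          inducedRho P φ T (X ⟨0, by omega⟩) *
            ∏ i : Fin (L - T - 1),
              inducedQ P T (X ⟨(i : ℕ), by have := i.isLt; omega⟩)
                (X ⟨(i : ℕ) + 1, by have := i.isLt; omega⟩)) ∧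
    piNormR (inducedSigma P π T) (inducedRho P φ T) = piNormR π φ := by
  refine ⟨fun L hL v _ X hX => ?_, ?_⟩
  · have : NeZero L := ⟨by omega⟩
    have : NeZero (L - T) := ⟨by omega⟩
    rw [Fin.prod_univ_pred_eq_prod_range P v, Fin.prod_univ_pred_eq_prod_range (inducedQ P T) X,
      show L - 1 = T + (L - T - 1) by omega]
    have hXwindow : ∀ i ≤ L - T - 1, ∀ j : Fin (T + 1),
        (X (Fin.ofNat (L - T) i)).1 j = v (Fin.ofNat L (i + j)) := by
      intro i hi j
      rw [hX]
      congr 1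
      ext
      simp only [Fin.val_ofNat]
      rw [Nat.mod_eq_of_lt (by omega), Nat.mod_eq_of_lt (by omega)]
    exact (inducedRho_mul_prod_inducedQ φ (fun k => v (Fin.ofNat L k))
      (fun k => X (Fin.ofNat (L - T) k)) _ hXwindow).symm
  · have hsum : ∑ u : windowSpace P T, inducedRho P φ T u ^ 2 / inducedSigma P π T u =
        ∑ a, φ a ^ 2 / π a := by
      simp only [inducedRho_sq_div_inducedSigma]
      rw [sum_windowSpace_mul_pathWeight hP.1 fun u => φ (u 0) ^ 2 / π (u 0)]
      exact sum_mul_pathWeight hP.2 T fun a => φ a ^ 2 / π a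
    rw [piNormR, piNormR, hsum]
end

section
/- Let P be a regular Markov chain on state space [N] with stationary distribution π and spectral expansion λ(P), let m ≥ 1, and let P̃ := P ⊗ I_m ∈ ℝ^{Nm×Nm}. Define λ(P̃) as the supremum of ‖P̃ᵀx‖_π/‖x‖_π over all nonzero x ∈ ℂ^{Nm} that are π-orthogonal to the subspace U = {π ⊗ w : w ∈ ℂ^m} (i.e., ⟨x,u⟩_π = 0 for all u ∈ U). Then λ(P̃) = λ(P). -/
open scoped BigOperators Kronecker ComplexOrder
open Matrix

/-- The spectral (operator 2-)norm of a matrix. -/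
noncomputable def spectralNormMat {𝕜 : Type*} [RCLike 𝕜] {m n : Type*} [Fintype m] [Fintype n]
    (A : Matrix m n 𝕜) : ℝ :=
  sSup {r : ℝ | ∃ x : n → 𝕜, x ≠ 0 ∧
    r = Real.sqrt (∑ i, ‖(A *ᵥ x) i‖ ^ 2) / Real.sqrt (∑ j, ‖x j‖ ^ 2)}

/-- The `π`-inner product `⟨x, y⟩_π = y* (Π⁻¹ ⊗ I_m) x` on `ℂ^{N m}`. -/
noncomputable def piInnerKron {N m : ℕ} (π : Fin N → ℝ) (x y : Fin N × Fin m → ℂ) : ℂ :=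
  ∑ p, (starRingEnd ℂ) (y p) * x p / (π p.1 : ℂ)

/-- The `π`-norm on `ℂ^{N m}`. -/
noncomputable def piNormKron {N m : ℕ} (π : Fin N → ℝ) (x : Fin N × Fin m → ℂ) : ℝ :=
  Real.sqrt (∑ p, ‖x p‖ ^ 2 / π p.1)

/-- Membership in the subspace `U = {π ⊗ w : w ∈ ℂ^m}`. -/
def memU {N m : ℕ} (π : Fin N → ℝ) (x : Fin N × Fin m → ℂ) : Prop :=
  ∃ w : Fin m → ℂ, ∀ p, x p = (π p.1 : ℂ) * w p.2

/-- `π`-orthogonality to the subspace `U = {π ⊗ w : w ∈ ℂ^m}`. -/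
noncomputable def perpU {N m : ℕ} (π : Fin N → ℝ) (x : Fin N × Fin m → ℂ) : Prop :=
  ∀ w : Fin m → ℂ, piInnerKron π x (fun p => (π p.1 : ℂ) * w p.2) = 0

/-!
Write `x ∈ ℂ^{N m}` through its columns `x_j = (x (i, j))_i`. Then `P̃ᵀ` acts on each column as
`Pᵀ`, both `π`-norms split as sums over the columns, and `x ⊥_π U` iff every column is
`π`-orthogonal to `π`. Hence a ratio `‖P̃ᵀ x‖_π / ‖x‖_π` is a mediant of column ratios for `P`
and is dominated by one of them, while every ratio for `P` is attained by `P̃` on a vector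
supported in one column. Two sets of reals each dominating the other have the same `sSup`, also
when they are empty or unbounded.
-/

section Kronecker

variable {R l n m : Type*} [NonAssocSemiring R] [Fintype n] [Fintype m] [DecidableEq m]

theorem kronecker_one_mulVec_apply (B : Matrix l n R) (x : n × m → R) (i : l) (j : m) :
    ((B ⊗ₖ (1 : Matrix m m R)) *ᵥ x) (i, j) = (B *ᵥ fun k => x (k, j)) i := by
  simp [mulVec, dotProduct, one_apply, Fintype.sum_prod_type]

end Kronecker

theorem Finset.exists_sum_div_sum_le {ι : Type*} {s : Finset ι} {a b : ι → ℝ}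
    (hb : ∀ i ∈ s, 0 ≤ b i) (hab : ∀ i ∈ s, b i = 0 → a i ≤ 0) (hpos : 0 < ∑ i ∈ s, b i) :
    ∃ i ∈ s, 0 < b i ∧ (∑ i ∈ s, a i) / ∑ i ∈ s, b i ≤ a i / b i := by
  have hne : (s.filter fun i => 0 < b i).Nonempty := by
    by_contra h
    rw [Finset.not_nonempty_iff_eq_empty, Finset.filter_eq_empty_iff] at h
    have : ∑ i ∈ s, b i ≤ 0 := Finset.sum_nonpos fun i hi => not_lt.1 (h hi)
    linarith
  obtain ⟨k, hk, hmax⟩ := Finset.exists_max_image _ (fun i => a i / b i) hne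
  rw [Finset.mem_filter] at hk
  refine ⟨k, hk.1, hk.2, (div_le_iff₀ hpos).2 ?_⟩
  rw [Finset.mul_sum]
  refine Finset.sum_le_sum fun i hi => ?_
  rcases (hb i hi).eq_or_lt with h0 | hbi
  · simpa [← h0] using hab i hi h0.symm
  · exact (div_le_iff₀ hbi).1 (hmax i (Finset.mem_filter.2 ⟨hi, hbi⟩))

section WeightedNorm

variable {S : Type*} [Fintype S] {w : S → ℝ}

theorem sum_norm_sq_div_nonneg (hw : ∀ i, 0 ≤ w i) (x : S → ℂ) :
    0 ≤ ∑ i, ‖x i‖ ^ 2 / w i :=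
  Finset.sum_nonneg fun i _ => div_nonneg (sq_nonneg _) (hw i)

theorem sum_norm_sq_div_pos (hw : ∀ i, 0 < w i) {x : S → ℂ} (hx : x ≠ 0) :
    0 < ∑ i, ‖x i‖ ^ 2 / w i := by
  obtain ⟨i, hi⟩ := Function.ne_iff.1 hx
  exact Finset.sum_pos' (fun k _ => div_nonneg (sq_nonneg _) (hw k).le)
    ⟨i, Finset.mem_univ i, div_pos (pow_pos (norm_pos_iff.2 hi) 2) (hw i)⟩

end WeightedNorm

section Columns

variable {N m : ℕ} {π : Fin N → ℝ}

theorem piNormKron_eq_sqrt_sum_columns (π : Fin N → ℝ) (x : Fin N × Fin m → ℂ) :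
    piNormKron π x = √(∑ j, ∑ i, ‖x (i, j)‖ ^ 2 / π i) := by
  rw [piNormKron, Fintype.sum_prod_type_right]

theorem piNormKron_kronecker_one_transpose_mulVec (A : Matrix (Fin N) (Fin N) ℂ)
    (π : Fin N → ℝ) (x : Fin N × Fin m → ℂ) :
    piNormKron π ((A ⊗ₖ (1 : Matrix (Fin m) (Fin m) ℂ))ᵀ *ᵥ x) =
      √(∑ j, ∑ i, ‖(Aᵀ *ᵥ fun k => x (k, j)) i‖ ^ 2 / π i) := by
  rw [piNormKron_eq_sqrt_sum_columns, ← kroneckerMap_transpose, transpose_one]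
  simp_rw [kronecker_one_mulVec_apply]

theorem piInnerKron_kronecker (π : Fin N → ℝ) (x : Fin N × Fin m → ℂ) (w : Fin m → ℂ) :
    piInnerKron π x (fun p => (π p.1 : ℂ) * w p.2) =
      ∑ j, (starRingEnd ℂ) (w j) * piInner π (fun i => x (i, j)) (fun i => (π i : ℂ)) := by
  rw [piInnerKron, Fintype.sum_prod_type_right]
  refine Finset.sum_congr rfl fun j _ => ?_
  rw [piInner, Finset.mul_sum]
  refine Finset.sum_congr rfl fun i _ => ?_
  rw [map_mul]
  ring

theorem perpU_iff {x : Fin N × Fin m → ℂ} :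
    perpU π x ↔ ∀ j, piInner π (fun i => x (i, j)) (fun i => (π i : ℂ)) = 0 := by
  simp_rw [perpU, piInnerKron_kronecker]
  refine ⟨fun h j => ?_, fun h w => by simp [h]⟩
  simpa [Pi.single_apply] using h (Pi.single j 1)

theorem exists_column_ratio_ge (A : Matrix (Fin N) (Fin N) ℂ) (hπ : ∀ i, 0 < π i)
    {x : Fin N × Fin m → ℂ} (hx : x ≠ 0) :
    ∃ j, (fun i => x (i, j)) ≠ 0 ∧
      piNormKron π ((A ⊗ₖ (1 : Matrix (Fin m) (Fin m) ℂ))ᵀ *ᵥ x) / piNormKron π x ≤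
        piNorm π (Aᵀ *ᵥ fun i => x (i, j)) / piNorm π (fun i => x (i, j)) := by
  have hcol_zero : ∀ j, ∑ i, ‖x (i, j)‖ ^ 2 / π i = 0 → (fun i => x (i, j)) = 0 := fun j h0 =>
    by_contra fun hj => (sum_norm_sq_div_pos hπ hj).ne' h0
  have htotal : 0 < ∑ j, ∑ i, ‖x (i, j)‖ ^ 2 / π i := by
    simpa only [Fintype.sum_prod_type_right] using sum_norm_sq_div_pos (fun p => hπ p.1) hx
  obtain ⟨j, -, hj, hle⟩ := Finset.exists_sum_div_sum_le
    (a := fun j => ∑ i, ‖(Aᵀ *ᵥ fun k => x (k, j)) i‖ ^ 2 / π i)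
    (fun j _ => sum_norm_sq_div_nonneg (fun i => (hπ i).le) _)
    (fun j _ h0 => by simp [hcol_zero j h0]) htotal
  refine ⟨j, fun h => hj.ne' ?_, ?_⟩
  · simp [show ∀ i, x (i, j) = 0 from congrFun h]
  · rw [piNormKron_kronecker_one_transpose_mulVec, piNormKron_eq_sqrt_sum_columns, piNorm,
      piNorm, ← Real.sqrt_div' _ htotal.le, ← Real.sqrt_div' _ hj.le]
    exact Real.sqrt_le_sqrt hle

def embedColumn (j₀ : Fin m) (x : Fin N → ℂ) : Fin N × Fin m → ℂ :=
  fun p => if p.2 = j₀ then x p.1 else 0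

theorem embedColumn_column (j₀ : Fin m) (x : Fin N → ℂ) (j : Fin m) :
    (fun i => embedColumn j₀ x (i, j)) = if j = j₀ then x else 0 := by
  ext i
  split_ifs with h <;> simp [embedColumn, h]

theorem embedColumn_ne_zero (j₀ : Fin m) {x : Fin N → ℂ} (hx : x ≠ 0) : embedColumn j₀ x ≠ 0 :=
  fun h => hx (funext fun i => by simpa [embedColumn] using congrFun h (i, j₀))

theorem perpU_embedColumn (j₀ : Fin m) {x : Fin N → ℂ}
    (hx : piInner π x (fun i => (π i : ℂ)) = 0) : perpU π (embedColumn j₀ x) := by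
  rw [perpU_iff]
  intro j
  rw [embedColumn_column]
  split_ifs
  · exact hx
  · simp [piInner]

theorem sum_columns_embedColumn (j₀ : Fin m) (x : Fin N → ℂ) (f : (Fin N → ℂ) → ℝ)
    (hf : f 0 = 0) : ∑ j, f (fun i => embedColumn j₀ x (i, j)) = f x := by
  simp_rw [embedColumn_column, apply_ite f, hf]
  simp

theorem piNormKron_embedColumn (j₀ : Fin m) (x : Fin N → ℂ) :
    piNormKron π (embedColumn j₀ x) = piNorm π x := by
  rw [piNormKron_eq_sqrt_sum_columns, piNorm]
  exact congrArg _ (sum_columns_embedColumn j₀ x (fun y => ∑ i, ‖y i‖ ^ 2 / π i) (by simp))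

theorem piNormKron_kronecker_one_transpose_mulVec_embedColumn (A : Matrix (Fin N) (Fin N) ℂ)
    (j₀ : Fin m) (x : Fin N → ℂ) :
    piNormKron π ((A ⊗ₖ (1 : Matrix (Fin m) (Fin m) ℂ))ᵀ *ᵥ embedColumn j₀ x) =
      piNorm π (Aᵀ *ᵥ x) := by
  rw [piNormKron_kronecker_one_transpose_mulVec, piNorm]
  exact congrArg _
    (sum_columns_embedColumn j₀ x (fun y => ∑ i, ‖(Aᵀ *ᵥ y) i‖ ^ 2 / π i) (by simp))

end Columns

theorem stmt_10_general {N m : ℕ} (hm : 1 ≤ m)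
    (P : Matrix (Fin N) (Fin N) ℝ) (π : Fin N → ℝ)
    (hπ : IsStationaryMC P π) :
    sSup {r : ℝ | ∃ x : Fin N × Fin m → ℂ, x ≠ 0 ∧ perpU π x ∧
        r = piNormKron π
              (((P.map Complex.ofReal) ⊗ₖ (1 : Matrix (Fin m) (Fin m) ℂ))ᵀ *ᵥ x) /
            piNormKron π x} = specExp P π := by
  refine csSup_eq_csSup_of_forall_exists_le ?_ ?_
  · rintro _ ⟨x, hx, hperp, rfl⟩
    obtain ⟨j, hj, hle⟩ := exists_column_ratio_ge (P.map Complex.ofReal) hπ.1 hx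
    exact ⟨_, ⟨_, hj, perpU_iff.1 hperp j, rfl⟩, hle⟩
  · rintro _ ⟨x, hx, horth, rfl⟩
    refine ⟨_, ⟨embedColumn ⟨0, hm⟩ x, embedColumn_ne_zero _ hx, perpU_embedColumn _ horth, rfl⟩,
      ?_⟩
    rw [piNormKron_embedColumn, piNormKron_kronecker_one_transpose_mulVec_embedColumn]

theorem stmt_10 {N m : ℕ} (hm : 1 ≤ m)
    (P : Matrix (Fin N) (Fin N) ℝ) (π : Fin N → ℝ)
    (hP : IsMarkov P) (hreg : IsRegularMC P) (hπ : IsStationaryMC P π) :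
    sSup {r : ℝ | ∃ x : Fin N × Fin m → ℂ, x ≠ 0 ∧ perpU π x ∧
        r = piNormKron π
              (((P.map Complex.ofReal) ⊗ₖ (1 : Matrix (Fin m) (Fin m) ℂ))ᵀ *ᵥ x) /
            piNormKron π x} = specExp P π :=
  stmt_10_general hm P π hπ
end

section
/- Let P be a regular Markov chain on state space [N] with stationary distribution π. Let m ≥ 1, ℓ ≥ 0, t > 0, and let H_1,…,H_N ∈ ℂ^{m×m} satisfy ‖H_i‖₂ ≤ ℓ for all i and Σ_{i∈[N]} π_i H_i = 0. Let E ∈ ℂ^{Nm×Nm} be the block-diagonal matrix with i-th diagonal block exp(tH_i), and let P̃ := P ⊗ I_m. Then for every z ∈ ℂ^{Nm}, ‖( P̃ᵀ E* z^∥ )^∥‖_π ≤ (exp(tℓ) − tℓ)·‖z^∥‖_π. -/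
open scoped BigOperators Kronecker ComplexOrder
open Matrix

/-- The spectral (operator 2-)norm of a matrix. -/
noncomputable def matSpectralNorm {𝕜 : Type*} [RCLike 𝕜] {m n : Type*} [Fintype m] [Fintype n]
    (A : Matrix m n 𝕜) : ℝ :=
  sSup {r : ℝ | ∃ x : n → 𝕜, x ≠ 0 ∧
    r = Real.sqrt (∑ i, ‖(A *ᵥ x) i‖ ^ 2) / Real.sqrt (∑ j, ‖x j‖ ^ 2)}

/-- The matrix exponential, `exp A = ∑ A^k / k!`. -/
noncomputable def mexp {m : Type*} [Fintype m] [DecidableEq m]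
    (A : Matrix m m ℂ) : Matrix m m ℂ :=
  ∑' k : ℕ, ((k.factorial : ℂ)⁻¹) • A ^ k

/-- The block-diagonal matrix `diag (M 1, …, M N)`. -/
def blockDiag' {S m : Type*} [DecidableEq S] (M : S → Matrix m m ℂ) :
    Matrix (S × m) (S × m) ℂ :=
  Matrix.of fun p q => if p.1 = q.1 then M p.1 p.2 q.2 else 0

/-! Write `z^∥ = π ⊗ w`. Since `P` is row-stochastic, `P̃ᵀ` preserves the column sums
`∑ᵢ v (i, ·)`, and since the `π`-orthogonal complement of `U` consists of the vectors with zero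
column sums, `(P̃ᵀ E* z^∥)^∥ = π ⊗ M w` with `M = ∑ᵢ πᵢ exp(t Hᵢ)*`; moreover `‖π ⊗ w‖_π = ‖w‖₂`.
Because `∑ᵢ πᵢ Hᵢ = 0`, `M = 1 + ∑ᵢ πᵢ (exp(t Hᵢ)* - 1 - t Hᵢ*)`, and comparing exponential series
termwise bounds each remainder by `exp(tℓ) - 1 - tℓ`. -/

section ExpRemainder

variable {𝔸 : Type*} [NormedRing 𝔸] [CompleteSpace 𝔸]

theorem norm_exp_sub_one_sub_le (𝕂 : Type*) [RCLike 𝕂] [NormedAlgebra 𝕂 𝔸] {x : 𝔸} {c : ℝ}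
    (hx : ‖x‖ ≤ c) : ‖NormedSpace.exp x - 1 - x‖ ≤ Real.exp c - 1 - c := by
  have hsum_x := (hasSum_nat_add_iff' 2).mpr (NormedSpace.exp_series_hasSum_exp' (𝕂 := 𝕂) x)
  have hsum_c := (hasSum_nat_add_iff' 2).mpr (NormedSpace.exp_series_hasSum_exp' (𝕂 := ℝ) c)
  simp only [Finset.sum_range_succ, Finset.sum_range_zero, Nat.factorial_zero,
    Nat.factorial_one, Nat.cast_one, inv_one, pow_zero, pow_one, one_smul, zero_add,
    ← Real.exp_eq_exp_ℝ] at hsum_x hsum_c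
  rw [sub_sub, ← hsum_x.tsum_eq, sub_sub]
  refine tsum_of_norm_bounded hsum_c fun n => ?_
  rw [norm_smul, norm_inv, RCLike.norm_natCast, smul_eq_mul]
  gcongr
  exact (norm_pow_le' x (by omega)).trans (pow_le_pow_left₀ (norm_nonneg x) hx _)

theorem norm_sum_smul_exp_le (𝕂 : Type*) [RCLike 𝕂] [NormedAlgebra 𝕂 𝔸] {ι : Type*}
    [Fintype ι] (hone : ‖(1 : 𝔸)‖ ≤ 1) {w : ι → ℝ} (hw0 : ∀ i, 0 ≤ w i) (hw1 : ∑ i, w i = 1)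
    {B : ι → 𝔸} {c : ℝ} (hB : ∀ i, ‖B i‖ ≤ c) (hmean : ∑ i, (w i : 𝕂) • B i = 0) :
    ‖∑ i, (w i : 𝕂) • NormedSpace.exp (B i)‖ ≤ Real.exp c - c := by
  have hsplit : ∑ i, (w i : 𝕂) • NormedSpace.exp (B i) =
      1 + ∑ i, (w i : 𝕂) • (NormedSpace.exp (B i) - 1 - B i) := by
    simp only [smul_sub, Finset.sum_sub_distrib, hmean, ← Finset.sum_smul, ← RCLike.ofReal_sum,
      hw1, RCLike.ofReal_one, one_smul]
    abel
  have hrem : ‖∑ i, (w i : 𝕂) • (NormedSpace.exp (B i) - 1 - B i)‖ ≤ Real.exp c - 1 - c :=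
    calc _ ≤ ∑ i, w i * (Real.exp c - 1 - c) := by
          refine (norm_sum_le _ _).trans (Finset.sum_le_sum fun i _ => ?_)
          rw [norm_smul, RCLike.norm_ofReal, abs_of_nonneg (hw0 i)]
          exact mul_le_mul_of_nonneg_left (norm_exp_sub_one_sub_le 𝕂 (hB i)) (hw0 i)
      _ = Real.exp c - 1 - c := by rw [← Finset.sum_mul, hw1, one_mul]
  rw [hsplit]
  calc _ ≤ ‖(1 : 𝔸)‖ + (Real.exp c - 1 - c) := (norm_add_le _ _).trans (by gcongr)
    _ ≤ Real.exp c - c := by linarith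

end ExpRemainder

open scoped Matrix.Norms.L2Operator

section MatrixNorm

variable {𝕜 : Type*} [RCLike 𝕜] {m n : Type*} [Fintype m] [Fintype n]

theorem sqrt_sum_norm_sq_eq_norm_toLp (x : n → 𝕜) :
    Real.sqrt (∑ i, ‖x i‖ ^ 2) = ‖WithLp.toLp 2 x‖ :=
  (EuclideanSpace.norm_eq _).symm

variable [DecidableEq n]

theorem Matrix.l2_opNorm_one_le : ‖(1 : Matrix n n 𝕜)‖ ≤ 1 := by
  rw [Matrix.cstar_norm_def, map_one]
  exact ContinuousLinearMap.norm_id_le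

theorem Matrix.norm_toLp_mulVec_le (A : Matrix m n 𝕜) (x : n → 𝕜) :
    ‖WithLp.toLp 2 (A *ᵥ x)‖ ≤ ‖A‖ * ‖WithLp.toLp 2 x‖ :=
  A.l2_opNorm_mulVec (WithLp.toLp 2 x)

theorem Matrix.l2_opNorm_le_matSpectralNorm (A : Matrix m n 𝕜) : ‖A‖ ≤ matSpectralNorm A := by
  set S := {r : ℝ | ∃ x : n → 𝕜, x ≠ 0 ∧
    r = Real.sqrt (∑ i, ‖(A *ᵥ x) i‖ ^ 2) / Real.sqrt (∑ j, ‖x j‖ ^ 2)}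
  have hS_bdd : BddAbove S := by
    refine ⟨‖A‖, ?_⟩
    rintro r ⟨x, -, rfl⟩
    rw [sqrt_sum_norm_sq_eq_norm_toLp (A *ᵥ x), sqrt_sum_norm_sq_eq_norm_toLp x]
    exact div_le_of_le_mul₀ (norm_nonneg _) (norm_nonneg _) (A.norm_toLp_mulVec_le x)
  rw [Matrix.l2_opNorm_def]
  refine ContinuousLinearMap.opNorm_le_bound _ (Real.sSup_nonneg ?_) fun x => ?_
  · rintro r ⟨x, -, rfl⟩
    positivity
  rcases eq_or_ne x 0 with rfl | hx
  · simp
  rw [← div_le_iff₀ (norm_pos_iff.2 hx)]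
  refine le_csSup hS_bdd ⟨x.ofLp, by simpa using hx, ?_⟩
  rw [sqrt_sum_norm_sq_eq_norm_toLp (A *ᵥ x.ofLp), sqrt_sum_norm_sq_eq_norm_toLp x.ofLp,
    WithLp.toLp_ofLp]
  rfl

end MatrixNorm

theorem mexp_eq_exp {n : Type*} [Fintype n] [DecidableEq n] (A : Matrix n n ℂ) :
    mexp A = NormedSpace.exp A := by
  rw [NormedSpace.exp_eq_tsum ℂ]
  rfl

theorem l2_opNorm_sum_smul_mexp_conjTranspose_le {ι n : Type*} [Fintype ι] [Fintype n]
    [DecidableEq n] {π : ι → ℝ} (hπ0 : ∀ i, 0 ≤ π i) (hπ1 : ∑ i, π i = 1)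
    {H : ι → Matrix n n ℂ} {t ℓ : ℝ} (ht : 0 ≤ t) (hH : ∀ i, ‖H i‖ ≤ ℓ)
    (hmean : ∑ i, π i • H i = 0) :
    ‖∑ i, (π i : ℂ) • (mexp ((t : ℂ) • H i))ᴴ‖ ≤ Real.exp (t * ℓ) - t * ℓ := by
  have hB : ∀ i, ‖(t : ℂ) • H i‖ ≤ t * ℓ := fun i => by
    rw [norm_smul, Complex.norm_real, Real.norm_of_nonneg ht]
    exact mul_le_mul_of_nonneg_left (hH i) ht
  have hBmean : ∑ i, (π i : ℂ) • (t : ℂ) • H i = 0 := by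
    have hsmul : ∀ i, (π i : ℂ) • H i = π i • H i := fun i => (Complex.coe_smul _ _).symm
    simp_rw [smul_comm (π _ : ℂ) (t : ℂ), ← Finset.smul_sum, hsmul, hmean, smul_zero]
  rw [← Matrix.l2_opNorm_conjTranspose, Matrix.conjTranspose_sum]
  simp only [Matrix.conjTranspose_smul, Complex.star_def, Complex.conj_ofReal,
    Matrix.conjTranspose_conjTranspose, mexp_eq_exp]
  exact norm_sum_smul_exp_le ℂ Matrix.l2_opNorm_one_le hπ0 hπ1 hB hBmean

section BlockVectors

variable {S n : Type*} [Fintype S]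

theorem sum_fst_of_forall_eq_mul {c : S → ℂ} (hc : ∑ i, c i = 1) {x : S × n → ℂ} {w : n → ℂ}
    (hx : ∀ p, x p = c p.1 * w p.2) (a : n) : ∑ i, x (i, a) = w a := by
  simp only [hx, ← Finset.sum_mul, hc, one_mul]

variable [Fintype n]

theorem sum_fst_kroneckerMap_one_transpose_mulVec [DecidableEq n] {Q : Matrix S S ℂ}
    (hQ : ∀ i, ∑ j, Q i j = 1) (v : S × n → ℂ) (a : n) :
    ∑ j, ((Q ⊗ₖ (1 : Matrix n n ℂ))ᵀ *ᵥ v) (j, a) = ∑ i, v (i, a) := by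
  simp only [Matrix.mulVec, dotProduct, Fintype.sum_prod_type, Matrix.transpose_apply,
    Matrix.kroneckerMap_apply, Matrix.one_apply, mul_ite, mul_one, mul_zero, ite_mul, zero_mul,
    Finset.sum_ite_eq', Finset.mem_univ, if_true]
  rw [Finset.sum_comm]
  simp only [← Finset.sum_mul, hQ, one_mul]

theorem blockDiag'_conjTranspose_mulVec_apply [DecidableEq S] (M : S → Matrix n n ℂ)
    (x : S × n → ℂ) (i : S) (b : n) :
    ((_root_.blockDiag' M)ᴴ *ᵥ x) (i, b) = ((M i)ᴴ *ᵥ fun d => x (i, d)) b := by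
  simp only [mulVec, dotProduct, Fintype.sum_prod_type, conjTranspose_apply, _root_.blockDiag',
    of_apply]
  rw [Finset.sum_eq_single i (fun j _ hj => by simp [hj]) (by simp)]
  simp

theorem sum_fst_blockDiag'_conjTranspose_mulVec [DecidableEq S] (M : S → Matrix n n ℂ)
    {c : S → ℂ} {x : S × n → ℂ} {w : n → ℂ} (hx : ∀ p, x p = c p.1 * w p.2) (a : n) :
    ∑ i, ((_root_.blockDiag' M)ᴴ *ᵥ x) (i, a) = ((∑ i, c i • (M i)ᴴ) *ᵥ w) a := by
  have hx_slice : ∀ i, (fun d => x (i, d)) = c i • w := fun i => funext fun d => hx (i, d)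
  simp only [blockDiag'_conjTranspose_mulVec_apply, hx_slice, Matrix.sum_mulVec, mulVec_smul,
    smul_mulVec, Finset.sum_apply]

theorem sum_fst_eq_zero_of_perpU {N m : ℕ} {π : Fin N → ℝ} (hπ : ∀ i, π i ≠ 0)
    {x : Fin N × Fin m → ℂ} (hx : perpU π x) (a : Fin m) : ∑ j, x (j, a) = 0 := by
  have h := hx (Pi.single a 1)
  simp only [piInnerKron, Pi.single_apply, apply_ite, mul_one, mul_zero, Complex.conj_ofReal,
    map_zero, ite_mul, zero_mul, Fintype.sum_prod_type, ite_div, zero_div, Finset.sum_ite_eq',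
    Finset.mem_univ, if_true] at h
  simpa only [mul_div_cancel_left₀ _ (Complex.ofReal_ne_zero.2 (hπ _))] using h

end BlockVectors

theorem piNormKron_of_forall_eq_mul {N m : ℕ} {π : Fin N → ℝ} (hπ0 : ∀ i, 0 < π i)
    (hπ1 : ∑ i, π i = 1) {x : Fin N × Fin m → ℂ} {w : Fin m → ℂ}
    (hx : ∀ p, x p = π p.1 * w p.2) : piNormKron π x = ‖WithLp.toLp 2 w‖ := by
  rw [piNormKron, ← sqrt_sum_norm_sq_eq_norm_toLp, Fintype.sum_prod_type, Finset.sum_comm]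
  congr 1
  refine Finset.sum_congr rfl fun a _ => ?_
  calc ∑ j, ‖x (j, a)‖ ^ 2 / π j = ∑ j, π j * ‖w a‖ ^ 2 := by
        refine Finset.sum_congr rfl fun j _ => ?_
        rw [hx, norm_mul, Complex.norm_real, Real.norm_of_nonneg (hπ0 j).le]
        field_simp [(hπ0 j).ne']
    _ = ‖w a‖ ^ 2 := by rw [← Finset.sum_mul, hπ1, one_mul]

theorem stmt_12_general {N m : ℕ}
    (P : Matrix (Fin N) (Fin N) ℝ) (π : Fin N → ℝ)
    (hP : IsMarkov P) (hπ : IsStationaryMC P π)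
    (ℓ t : ℝ) (ht : 0 < t)
    (H : Fin N → Matrix (Fin m) (Fin m) ℂ)
    (hH : ∀ i, matSpectralNorm (H i) ≤ ℓ)
    (hmean : ∑ i, π i • H i = 0)
    (zpar : Fin N × Fin m → ℂ)
    (hzpar : memU π zpar)
    (y ypar yperp : Fin N × Fin m → ℂ)
    (hy : y = ((P.map Complex.ofReal) ⊗ₖ (1 : Matrix (Fin m) (Fin m) ℂ))ᵀ *ᵥ
      ((blockDiag' fun i => mexp ((t : ℂ) • H i))ᴴ *ᵥ zpar))
    (hdecy : y = ypar + yperp) (hypar : memU π ypar) (hyperp : perpU π yperp) :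
    piNormKron π ypar ≤ (Real.exp (t * ℓ) - t * ℓ) * piNormKron π zpar := by
  obtain ⟨w, hw⟩ := hzpar
  obtain ⟨u, hu⟩ := hypar
  obtain ⟨hπ_pos, hπ_one, -⟩ := hπ
  have hπ_one' : ∑ i, (π i : ℂ) = 1 := by exact_mod_cast hπ_one
  have hP_row : ∀ i, ∑ j, P.map Complex.ofReal i j = 1 := fun i => by
    simpa using congrArg Complex.ofReal (hP.2 i)
  set M := ∑ i, (π i : ℂ) • (mexp ((t : ℂ) • H i))ᴴ
  have hu_eq : u = M *ᵥ w := funext fun a => calc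
    u a = ∑ j, ypar (j, a) := (sum_fst_of_forall_eq_mul hπ_one' hu a).symm
    _ = ∑ j, y (j, a) := by
      simp only [hdecy, Pi.add_apply, Finset.sum_add_distrib,
        sum_fst_eq_zero_of_perpU (fun i => (hπ_pos i).ne') hyperp a, add_zero]
    _ = (M *ᵥ w) a := by
      rw [hy, sum_fst_kroneckerMap_one_transpose_mulVec hP_row]
      exact sum_fst_blockDiag'_conjTranspose_mulVec _ hw a
  have hM : ‖M‖ ≤ Real.exp (t * ℓ) - t * ℓ :=
    l2_opNorm_sum_smul_mexp_conjTranspose_le (fun i => (hπ_pos i).le) hπ_one ht.le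
      (fun i => (H i).l2_opNorm_le_matSpectralNorm.trans (hH i)) hmean
  rw [piNormKron_of_forall_eq_mul hπ_pos hπ_one hu, piNormKron_of_forall_eq_mul hπ_pos hπ_one hw,
    hu_eq]
  exact (M.norm_toLp_mulVec_le w).trans (by gcongr)

theorem stmt_12 {N m : ℕ} (hm : 1 ≤ m)
    (P : Matrix (Fin N) (Fin N) ℝ) (π : Fin N → ℝ)
    (hP : IsMarkov P) (hreg : IsRegularMC P) (hπ : IsStationaryMC P π)
    (ℓ t : ℝ) (hℓ : 0 ≤ ℓ) (ht : 0 < t)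
    (H : Fin N → Matrix (Fin m) (Fin m) ℂ)
    (hH : ∀ i, matSpectralNorm (H i) ≤ ℓ)
    (hmean : ∑ i, π i • H i = 0)
    (z zpar zperp : Fin N × Fin m → ℂ)
    (hdecz : z = zpar + zperp) (hzpar : memU π zpar) (hzperp : perpU π zperp)
    (y ypar yperp : Fin N × Fin m → ℂ)
    (hy : y = ((P.map Complex.ofReal) ⊗ₖ (1 : Matrix (Fin m) (Fin m) ℂ))ᵀ *ᵥ
      ((blockDiag' fun i => mexp ((t : ℂ) • H i))ᴴ *ᵥ zpar))
    (hdecy : y = ypar + yperp) (hypar : memU π ypar) (hyperp : perpU π yperp) :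
    piNormKron π ypar ≤ (Real.exp (t * ℓ) - t * ℓ) * piNormKron π zpar :=
  stmt_12_general P π hP hπ ℓ t ht H hH hmean zpar hzpar y ypar yperp hy hdecy hypar hyperp
end

section
/- Let P be a regular Markov chain on state space [N] with stationary distribution π and spectral expansion λ. Let m ≥ 1, ℓ ≥ 0, t > 0, and let H_1,…,H_N ∈ ℂ^{m×m} satisfy ‖H_i‖₂ ≤ ℓ for all i and Σ_{i∈[N]} π_i H_i = 0. Let E ∈ ℂ^{Nm×Nm} be the block-diagonal matrix with i-th diagonal block exp(tH_i), and let P̃ := P ⊗ I_m. Then for every z ∈ ℂ^{Nm}, ‖( P̃ᵀ E* z^∥ )^⊥‖_π ≤ λ·(exp(tℓ) − 1)·‖z^∥‖_π. -/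
open scoped BigOperators Kronecker ComplexOrder
open Matrix

/-- The spectral (operator 2-)norm of a matrix. -/
noncomputable def spectralNormM {𝕜 : Type*} [RCLike 𝕜] {m n : Type*} [Fintype m] [Fintype n]
    (A : Matrix m n 𝕜) : ℝ :=
  sSup {r : ℝ | ∃ x : n → 𝕜, x ≠ 0 ∧
    r = Real.sqrt (∑ i, ‖(A *ᵥ x) i‖ ^ 2) / Real.sqrt (∑ j, ‖x j‖ ^ 2)}

/-! Write `P̃ = P ⊗ I_m` and `x^⊥ = x - π ⊗ (∑ᵢ x(i, ·))`. Stationarity of `π` and the row sums of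
`P` make `P̃ᵀ` commute with `x ↦ x^⊥`, so for `x = E* z^∥` we get
`(P̃ᵀ x)^⊥ = P̃ᵀ x^⊥ = P̃ᵀ (x - z^∥)^⊥`. Column by column `P̃ᵀ` contracts vectors with vanishing
column sums by the factor `λ`, and `x ↦ x^⊥` is a contraction, so the norm is at most
`λ ‖x - z^∥‖_π`. Block by block `x - z^∥` is `(exp (t Hᵢ) - 1)*` applied to `z^∥`, and
`‖exp A - 1‖₂ ≤ exp ‖A‖₂ - 1 ≤ exp (t ℓ) - 1`. -/

section MatrixExp

open scoped Matrix.Norms.L2Operator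

theorem norm_mexp_sub_one_le {m : Type*} [Fintype m] [DecidableEq m] (A : Matrix m m ℂ) :
    ‖mexp A - 1‖ ≤ Real.exp ‖A‖ - 1 := by
  have hsum : Summable fun n : ℕ => ((n.factorial : ℂ)⁻¹) • A ^ n :=
    NormedSpace.expSeries_summable' A
  have hsum_norm : Summable fun n : ℕ => ‖(((n + 1).factorial : ℂ)⁻¹) • A ^ (n + 1)‖ :=
    (NormedSpace.norm_expSeries_summable' A).comp_injective (add_left_injective 1)
  have hsum_real : Summable fun n : ℕ => ‖A‖ ^ (n + 1) / (n + 1).factorial :=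
    (Real.summable_pow_div_factorial ‖A‖).comp_injective (add_left_injective 1)
  have hlhs : mexp A - 1 = ∑' n : ℕ, (((n + 1).factorial : ℂ)⁻¹) • A ^ (n + 1) := by
    rw [mexp, hsum.tsum_eq_zero_add]; simp
  have hrhs : Real.exp ‖A‖ - 1 = ∑' n : ℕ, ‖A‖ ^ (n + 1) / (n + 1).factorial := by
    simp only [Real.exp_eq_exp_ℝ, NormedSpace.exp_eq_tsum_div]
    rw [(Real.summable_pow_div_factorial ‖A‖).tsum_eq_zero_add]
    simp
  rw [hlhs, hrhs]
  refine (norm_tsum_le_tsum_norm hsum_norm).trans (hsum_norm.tsum_le_tsum (fun n => ?_) hsum_real)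
  rw [norm_smul, norm_inv, Complex.norm_natCast, div_eq_inv_mul]
  exact mul_le_mul_of_nonneg_left (norm_pow_le' A n.succ_pos) (by positivity)

theorem sum_norm_mulVec_sq_le {𝕜 : Type*} [RCLike 𝕜] {m n : Type*} [Fintype m] [Fintype n]
    [DecidableEq n] (A : Matrix m n 𝕜) (v : n → 𝕜) :
    ∑ i, ‖(A *ᵥ v) i‖ ^ 2 ≤ ‖A‖ ^ 2 * ∑ j, ‖v j‖ ^ 2 := by
  have h := pow_le_pow_left₀ (norm_nonneg _)
    (Matrix.l2_opNorm_mulVec A ((EuclideanSpace.equiv n 𝕜).symm v)) 2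
  simpa [mul_pow, EuclideanSpace.norm_sq_eq] using h

theorem norm_le_spectralNormM {𝕜 : Type*} [RCLike 𝕜] {m n : Type*} [Fintype m] [Fintype n]
    [DecidableEq n] (A : Matrix m n 𝕜) : ‖A‖ ≤ spectralNormM A := by
  have hratio : ∀ v : n → 𝕜, Real.sqrt (∑ i, ‖(A *ᵥ v) i‖ ^ 2) ≤
      ‖A‖ * Real.sqrt (∑ j, ‖v j‖ ^ 2) := fun v => by
    rw [← Real.sqrt_sq (norm_nonneg A), ← Real.sqrt_mul (sq_nonneg _)]
    exact Real.sqrt_le_sqrt (sum_norm_mulVec_sq_le A v)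
  have hbdd : BddAbove {r : ℝ | ∃ v : n → 𝕜, v ≠ 0 ∧
      r = Real.sqrt (∑ i, ‖(A *ᵥ v) i‖ ^ 2) / Real.sqrt (∑ j, ‖v j‖ ^ 2)} := by
    refine ⟨‖A‖, ?_⟩
    rintro r ⟨v, -, rfl⟩
    exact div_le_of_le_mul₀ (Real.sqrt_nonneg _) (norm_nonneg A) (hratio v)
  have hnonneg : 0 ≤ spectralNormM A :=
    Real.sSup_nonneg fun r ⟨v, _, hr⟩ => hr ▸ by positivity
  rw [Matrix.l2_opNorm_def]
  refine ContinuousLinearMap.opNorm_le_bound _ hnonneg fun v => ?_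
  by_cases hv : v = 0
  · simp [hv]
  have hpos : 0 < Real.sqrt (∑ j, ‖v j‖ ^ 2) := by
    simpa [← EuclideanSpace.norm_eq] using hv
  have h := le_csSup hbdd ⟨v, by simpa using hv, rfl⟩
  rw [div_le_iff₀ hpos] at h
  simpa [EuclideanSpace.norm_eq, spectralNormM] using h

theorem norm_mexp_smul_sub_one_le {m : Type*} [Fintype m] [DecidableEq m]
    {H : Matrix m m ℂ} {ℓ t : ℝ} (hH : spectralNormM H ≤ ℓ) (ht : 0 ≤ t) :
    ‖mexp ((t : ℂ) • H) - 1‖ ≤ Real.exp (t * ℓ) - 1 := by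
  refine (norm_mexp_sub_one_le _).trans (sub_le_sub_right (Real.exp_le_exp.2 ?_) 1)
  rw [norm_smul, Complex.norm_real, Real.norm_of_nonneg ht]
  exact mul_le_mul_of_nonneg_left ((norm_le_spectralNormM H).trans hH) ht

end MatrixExp

section SpectralExpansion

variable {S : Type*} [Fintype S] {P : Matrix S S ℝ} {π : S → ℝ}

theorem transpose_map_ofReal_mulVec_apply (P : Matrix S S ℝ) (x : S → ℂ) (i : S) :
    ((P.map Complex.ofReal)ᵀ *ᵥ x) i = ∑ j, (P j i : ℂ) * x j := by
  simp [Matrix.mulVec, dotProduct]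

-- Cauchy–Schwarz against the weights `π j * P j i`, which sum to `π i` by stationarity.
theorem sum_norm_transpose_mulVec_sq_div_le (hP : IsMarkov P) (hπ : IsStationaryMC P π)
    (x : S → ℂ) :
    ∑ i, ‖((P.map Complex.ofReal)ᵀ *ᵥ x) i‖ ^ 2 / π i ≤ ∑ j, ‖x j‖ ^ 2 / π j := by
  obtain ⟨hπpos, -, hstat⟩ := hπ
  have hcol : ∀ i, ‖((P.map Complex.ofReal)ᵀ *ᵥ x) i‖ ^ 2 / π i ≤
      ∑ j, P j i * (‖x j‖ ^ 2 / π j) := fun i => by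
    have hnorm : ‖((P.map Complex.ofReal)ᵀ *ᵥ x) i‖ ≤ ∑ j, P j i * ‖x j‖ := by
      rw [transpose_map_ofReal_mulVec_apply]
      refine (norm_sum_le _ _).trans_eq (Finset.sum_congr rfl fun j _ => ?_)
      rw [norm_mul, Complex.norm_real, Real.norm_of_nonneg (hP.1 j i)]
    have hCS : (∑ j, P j i * ‖x j‖) ^ 2 ≤ (∑ j, π j * P j i) * ∑ j, P j i * (‖x j‖ ^ 2 / π j) :=
      Finset.sum_sq_le_sum_mul_sum_of_sq_le_mul _
        (fun j _ => mul_nonneg (hπpos j).le (hP.1 j i))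
        (fun j _ => mul_nonneg (hP.1 j i) (div_nonneg (sq_nonneg _) (hπpos j).le))
        (fun j _ => by field_simp [(hπpos j).ne']; rfl)
    rw [div_le_iff₀ (hπpos i), mul_comm, ← hstat i]
    exact (pow_le_pow_left₀ (norm_nonneg _) hnorm 2).trans hCS
  calc ∑ i, ‖((P.map Complex.ofReal)ᵀ *ᵥ x) i‖ ^ 2 / π i
      ≤ ∑ i, ∑ j, P j i * (‖x j‖ ^ 2 / π j) := Finset.sum_le_sum fun i _ => hcol i
    _ = ∑ j, ‖x j‖ ^ 2 / π j := by
        rw [Finset.sum_comm]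
        simp only [← Finset.sum_mul, hP.2, one_mul]

theorem piNorm_nonneg (π : S → ℝ) (x : S → ℂ) : 0 ≤ piNorm π x := Real.sqrt_nonneg _

theorem piNorm_sq (hπ : ∀ i, 0 ≤ π i) (x : S → ℂ) : piNorm π x ^ 2 = ∑ i, ‖x i‖ ^ 2 / π i :=
  Real.sq_sqrt (Finset.sum_nonneg fun i _ => div_nonneg (sq_nonneg _) (hπ i))

theorem specExp_nonneg (P : Matrix S S ℝ) (π : S → ℝ) : 0 ≤ specExp P π :=
  Real.sSup_nonneg fun _ ⟨_, _, _, hr⟩ => hr ▸ div_nonneg (Real.sqrt_nonneg _) (Real.sqrt_nonneg _)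

theorem piNorm_transpose_mulVec_le (hP : IsMarkov P) (hπ : IsStationaryMC P π) {x : S → ℂ}
    (hx : piInner π x (fun i => (π i : ℂ)) = 0) :
    piNorm π ((P.map Complex.ofReal)ᵀ *ᵥ x) ≤ specExp P π * piNorm π x := by
  have hpos : ∀ {v : S → ℂ}, v ≠ 0 → 0 < piNorm π v := fun hv => by
    obtain ⟨j, hj⟩ := Function.ne_iff.1 hv
    exact Real.sqrt_pos.2 (Finset.sum_pos' (fun i _ => div_nonneg (sq_nonneg _) (hπ.1 i).le)
      ⟨j, Finset.mem_univ j, div_pos (pow_pos (norm_pos_iff.2 hj) 2) (hπ.1 j)⟩)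
  have hbdd : BddAbove {r : ℝ | ∃ v : S → ℂ, v ≠ 0 ∧ piInner π v (fun i => (π i : ℂ)) = 0 ∧
      r = piNorm π ((P.map Complex.ofReal)ᵀ *ᵥ v) / piNorm π v} := by
    refine ⟨1, ?_⟩
    rintro r ⟨v, hv, -, rfl⟩
    exact div_le_one_of_le₀ (Real.sqrt_le_sqrt (sum_norm_transpose_mulVec_sq_div_le hP hπ v))
      (hpos hv).le
  by_cases hx0 : x = 0
  · simp [hx0, piNorm]
  rw [← div_le_iff₀ (hpos hx0)]
  exact le_csSup hbdd ⟨x, hx0, hx, rfl⟩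

end SpectralExpansion

theorem sum_norm_sub_mul_sum_sq_div {S : Type*} [Fintype S] {π : S → ℝ} (hπ : ∀ i, π i ≠ 0)
    (hπsum : ∑ i, π i = 1) (x : S → ℂ) :
    ∑ i, ‖x i - π i * ∑ j, x j‖ ^ 2 / π i = ∑ i, ‖x i‖ ^ 2 / π i - ‖∑ j, x j‖ ^ 2 := by
  set s := ∑ j, x j
  have hterm : ∀ i, ‖x i - π i * s‖ ^ 2 / π i =
      ‖x i‖ ^ 2 / π i + π i * ‖s‖ ^ 2 - 2 * (x i * (starRingEnd ℂ) s).re := fun i => by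
    simp only [Complex.sq_norm, Complex.normSq_sub, map_mul, Complex.conj_ofReal,
      Complex.normSq_ofReal, Complex.re_ofReal_mul, mul_left_comm (x i)]
    field_simp [hπ i]
  have hcross : ∑ i, (x i * (starRingEnd ℂ) s).re = ‖s‖ ^ 2 := by
    rw [← Complex.re_sum, ← Finset.sum_mul, Complex.mul_conj, Complex.sq_norm,
      Complex.ofReal_re]
  simp only [hterm, Finset.sum_sub_distrib, Finset.sum_add_distrib, ← Finset.sum_mul,
    ← Finset.mul_sum, hπsum, hcross]
  ring

section TensorWithIdentity

variable {N m : ℕ} {π : Fin N → ℝ}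

def colSum (x : Fin N × Fin m → ℂ) (a : Fin m) : ℂ := ∑ i, x (i, a)

-- The paper's `z^⊥`: when `∑ i, π i = 1`, the `π`-orthogonal projection onto `U` is `π ⊗ colSum z`.
def perpPart (π : Fin N → ℝ) (x : Fin N × Fin m → ℂ) : Fin N × Fin m → ℂ :=
  fun p => x p - π p.1 * colSum x p.2

theorem perpU_iff_colSum_eq_zero (hπ : ∀ i, π i ≠ 0) {x : Fin N × Fin m → ℂ} :
    perpU π x ↔ ∀ a, colSum x a = 0 := by
  have hinner : ∀ w : Fin m → ℂ, piInnerKron π x (fun p => (π p.1 : ℂ) * w p.2) =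
      ∑ a, (starRingEnd ℂ) (w a) * colSum x a := fun w => by
    simp only [piInnerKron, colSum, Finset.mul_sum, map_mul, Complex.conj_ofReal]
    rw [Fintype.sum_prod_type_right]
    refine Finset.sum_congr rfl fun a _ => Finset.sum_congr rfl fun i _ => ?_
    field_simp [Complex.ofReal_ne_zero.2 (hπ i)]
  refine ⟨fun hx a => ?_, fun hx w => by simp [hinner, hx]⟩
  simpa [Pi.single_apply] using (hinner (Pi.single a 1)).symm.trans (hx _)

theorem colSum_perpPart (hπsum : ∑ i, π i = 1) (x : Fin N × Fin m → ℂ) (a : Fin m) :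
    colSum (perpPart π x) a = 0 := by
  simp [perpPart, colSum, Finset.sum_sub_distrib, ← Finset.sum_mul, ← Complex.ofReal_sum, hπsum]

theorem perpPart_add (x y : Fin N × Fin m → ℂ) :
    perpPart π (x + y) = perpPart π x + perpPart π y := by
  ext p
  simp only [perpPart, colSum, Pi.add_apply, Finset.sum_add_distrib]
  ring

theorem perpPart_eq_zero_of_memU (hπsum : ∑ i, π i = 1) {x : Fin N × Fin m → ℂ}
    (hx : memU π x) : perpPart π x = 0 := by
  obtain ⟨w, hw⟩ := hx
  ext p
  simp [perpPart, colSum, hw, ← Finset.sum_mul, ← Complex.ofReal_sum, hπsum]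

theorem perpPart_eq_self_of_perpU (hπ : ∀ i, π i ≠ 0) {x : Fin N × Fin m → ℂ}
    (hx : perpU π x) : perpPart π x = x := by
  ext p
  simp [perpPart, (perpU_iff_colSum_eq_zero hπ).1 hx]

theorem perpU_perpPart (hπ : ∀ i, π i ≠ 0) (hπsum : ∑ i, π i = 1) (x : Fin N × Fin m → ℂ) :
    perpU π (perpPart π x) :=
  (perpU_iff_colSum_eq_zero hπ).2 (colSum_perpPart hπsum x)

theorem eq_perpPart_of_eq_add (hπ : ∀ i, π i ≠ 0) (hπsum : ∑ i, π i = 1)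
    {y ypar yperp : Fin N × Fin m → ℂ} (hy : y = ypar + yperp) (hpar : memU π ypar)
    (hperp : perpU π yperp) : yperp = perpPart π y := by
  rw [hy, perpPart_add, perpPart_eq_zero_of_memU hπsum hpar, perpPart_eq_self_of_perpU hπ hperp,
    zero_add]

theorem perpPart_sub_of_memU (hπsum : ∑ i, π i = 1) (x : Fin N × Fin m → ℂ)
    {z : Fin N × Fin m → ℂ} (hz : memU π z) : perpPart π (x - z) = perpPart π x := by
  conv_rhs => rw [← sub_add_cancel x z, perpPart_add, perpPart_eq_zero_of_memU hπsum hz, add_zero]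

theorem blockDiag'_conjTranspose_mulVec_apply_s13 (M : Fin N → Matrix (Fin m) (Fin m) ℂ)
    (x : Fin N × Fin m → ℂ) (p : Fin N × Fin m) :
    ((blockDiag' M)ᴴ *ᵥ x) p = ((M p.1)ᴴ *ᵥ fun b => x (p.1, b)) p.2 := by
  simp [Matrix.mulVec, dotProduct, Fintype.sum_prod_type, _root_.blockDiag',
    Matrix.conjTranspose_apply, apply_ite, ite_mul]

theorem kron_one_transpose_mulVec_apply (P : Matrix (Fin N) (Fin N) ℝ)
    (x : Fin N × Fin m → ℂ) (p : Fin N × Fin m) :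
    (((P.map Complex.ofReal) ⊗ₖ (1 : Matrix (Fin m) (Fin m) ℂ))ᵀ *ᵥ x) p =
      ((P.map Complex.ofReal)ᵀ *ᵥ fun j => x (j, p.2)) p.1 := by
  simp [Matrix.mulVec, dotProduct, Fintype.sum_prod_type, Matrix.one_apply]

theorem perpPart_kron_one_transpose_mulVec {P : Matrix (Fin N) (Fin N) ℝ} (hP : IsMarkov P)
    (hπ : IsStationaryMC P π) (x : Fin N × Fin m → ℂ) :
    perpPart π (((P.map Complex.ofReal) ⊗ₖ (1 : Matrix (Fin m) (Fin m) ℂ))ᵀ *ᵥ x) =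
      ((P.map Complex.ofReal) ⊗ₖ (1 : Matrix (Fin m) (Fin m) ℂ))ᵀ *ᵥ perpPart π x := by
  have hcolSum : ∀ a, colSum (((P.map Complex.ofReal) ⊗ₖ (1 : Matrix (Fin m) (Fin m) ℂ))ᵀ *ᵥ x) a
      = colSum x a := fun a => by
    simp only [colSum, kron_one_transpose_mulVec_apply, transpose_map_ofReal_mulVec_apply]
    rw [Finset.sum_comm]
    simp only [← Finset.sum_mul, ← Complex.ofReal_sum, hP.2, Complex.ofReal_one, one_mul]
  have hstat : ∀ i, ∑ j, (P j i : ℂ) * π j = π i := fun i => by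
    simp only [← hπ.2.2 i, Complex.ofReal_sum, Complex.ofReal_mul, mul_comm]
  ext p
  simp only [perpPart, hcolSum, kron_one_transpose_mulVec_apply,
    transpose_map_ofReal_mulVec_apply, mul_sub, Finset.sum_sub_distrib, ← mul_assoc,
    ← Finset.sum_mul, hstat]

theorem piNormKron_le_mul_of_sum_le {x y : Fin N × Fin m → ℂ} {c : ℝ} (hc : 0 ≤ c)
    (h : ∑ p, ‖y p‖ ^ 2 / π p.1 ≤ c ^ 2 * ∑ p, ‖x p‖ ^ 2 / π p.1) :
    piNormKron π y ≤ c * piNormKron π x := by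
  rw [piNormKron, piNormKron, ← Real.sqrt_sq hc, ← Real.sqrt_mul (sq_nonneg c)]
  exact Real.sqrt_le_sqrt h

theorem piNormKron_kron_one_transpose_mulVec_le {P : Matrix (Fin N) (Fin N) ℝ} (hP : IsMarkov P)
    (hπ : IsStationaryMC P π) {x : Fin N × Fin m → ℂ} (hx : perpU π x) :
    piNormKron π (((P.map Complex.ofReal) ⊗ₖ (1 : Matrix (Fin m) (Fin m) ℂ))ᵀ *ᵥ x) ≤
      specExp P π * piNormKron π x := by
  refine piNormKron_le_mul_of_sum_le (specExp_nonneg P π) ?_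
  simp only [Fintype.sum_prod_type_right, Finset.mul_sum]
  refine Finset.sum_le_sum fun a _ => ?_
  rw [← Finset.mul_sum]
  have hcol : piInner π (fun j => x (j, a)) (fun i => (π i : ℂ)) = 0 := by
    rw [← (perpU_iff_colSum_eq_zero fun i => (hπ.1 i).ne').1 hx a]
    refine Finset.sum_congr rfl fun i _ => ?_
    simp only [Complex.conj_ofReal]
    field_simp [Complex.ofReal_ne_zero.2 (hπ.1 i).ne']
  have h := pow_le_pow_left₀ (piNorm_nonneg _ _) (piNorm_transpose_mulVec_le hP hπ hcol) 2
  simpa only [mul_pow, piNorm_sq fun i => (hπ.1 i).le, kron_one_transpose_mulVec_apply] using h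

theorem piNormKron_perpPart_le (hπ : ∀ i, 0 < π i) (hπsum : ∑ i, π i = 1)
    (x : Fin N × Fin m → ℂ) : piNormKron π (perpPart π x) ≤ piNormKron π x := by
  refine (piNormKron_le_mul_of_sum_le zero_le_one ?_).trans_eq (one_mul _)
  simp only [one_pow, one_mul, Fintype.sum_prod_type_right]
  refine Finset.sum_le_sum fun a _ => ?_
  have h := sum_norm_sub_mul_sum_sq_div (fun i => (hπ i).ne') hπsum fun i => x (i, a)
  simp only [perpPart, colSum, h]
  linarith [sq_nonneg ‖∑ i, x (i, a)‖]

open scoped Matrix.Norms.L2Operator in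
theorem piNormKron_blockDiag'_conjTranspose_mulVec_sub_le (hπ : ∀ i, 0 ≤ π i)
    {M : Fin N → Matrix (Fin m) (Fin m) ℂ} {s : ℝ} (hs : 0 ≤ s) (hM : ∀ i, ‖M i - 1‖ ≤ s)
    (x : Fin N × Fin m → ℂ) :
    piNormKron π ((blockDiag' M)ᴴ *ᵥ x - x) ≤ s * piNormKron π x := by
  refine piNormKron_le_mul_of_sum_le hs ?_
  simp only [Fintype.sum_prod_type, Finset.mul_sum]
  refine Finset.sum_le_sum fun i _ => ?_
  have hblock : ∀ a, ((blockDiag' M)ᴴ *ᵥ x - x) (i, a) = ((M i - 1)ᴴ *ᵥ fun b => x (i, b)) a :=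
    fun a => by
      rw [Pi.sub_apply, blockDiag'_conjTranspose_mulVec_apply_s13, conjTranspose_sub,
        conjTranspose_one, sub_mulVec, one_mulVec, Pi.sub_apply]
  have h := sum_norm_mulVec_sq_le (M i - 1)ᴴ fun b => x (i, b)
  rw [l2_opNorm_conjTranspose] at h
  have hMs := pow_le_pow_left₀ (norm_nonneg _) (hM i) 2
  simp only [hblock, ← Finset.sum_div, ← Finset.mul_sum, ← mul_div_assoc]
  gcongr
  · exact hπ i
  · exact h.trans (by gcongr)

end TensorWithIdentity

theorem stmt_13_general {N m : ℕ}
    (P : Matrix (Fin N) (Fin N) ℝ) (π : Fin N → ℝ)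
    (hP : IsMarkov P) (hπ : IsStationaryMC P π)
    (ℓ t : ℝ) (hℓ : 0 ≤ ℓ) (ht : 0 < t)
    (H : Fin N → Matrix (Fin m) (Fin m) ℂ)
    (hH : ∀ i, spectralNormM (H i) ≤ ℓ)
    (zpar : Fin N × Fin m → ℂ)
    (hzpar : memU π zpar)
    (y ypar yperp : Fin N × Fin m → ℂ)
    (hy : y = ((P.map Complex.ofReal) ⊗ₖ (1 : Matrix (Fin m) (Fin m) ℂ))ᵀ *ᵥ
      ((blockDiag' fun i => mexp ((t : ℂ) • H i))ᴴ *ᵥ zpar))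
    (hdecy : y = ypar + yperp) (hypar : memU π ypar) (hyperp : perpU π yperp) :
    piNormKron π yperp ≤ (specExp P π * (Real.exp (t * ℓ) - 1)) * piNormKron π zpar := by
  have hπpos : ∀ i, 0 < π i := hπ.1
  have hπsum : ∑ i, π i = 1 := hπ.2.1
  have hπ0 : ∀ i, π i ≠ 0 := fun i => (hπpos i).ne'
  set x := (blockDiag' fun i => mexp ((t : ℂ) • H i))ᴴ *ᵥ zpar
  calc piNormKron π yperp
      = piNormKron π (((P.map Complex.ofReal) ⊗ₖ (1 : Matrix (Fin m) (Fin m) ℂ))ᵀ *ᵥ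
          perpPart π (x - zpar)) := by
        rw [eq_perpPart_of_eq_add hπ0 hπsum hdecy hypar hyperp, hy,
          perpPart_kron_one_transpose_mulVec hP hπ, perpPart_sub_of_memU hπsum x hzpar]
    _ ≤ specExp P π * piNormKron π (perpPart π (x - zpar)) :=
        piNormKron_kron_one_transpose_mulVec_le hP hπ (perpU_perpPart hπ0 hπsum _)
    _ ≤ specExp P π * piNormKron π (x - zpar) :=
        mul_le_mul_of_nonneg_left (piNormKron_perpPart_le hπpos hπsum _) (specExp_nonneg P π)
    _ ≤ specExp P π * ((Real.exp (t * ℓ) - 1) * piNormKron π zpar) :=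
        mul_le_mul_of_nonneg_left
          (piNormKron_blockDiag'_conjTranspose_mulVec_sub_le (fun i => (hπpos i).le)
            (sub_nonneg.2 (Real.one_le_exp (mul_nonneg ht.le hℓ)))
            (fun i => norm_mexp_smul_sub_one_le (hH i) ht.le) zpar)
          (specExp_nonneg P π)
    _ = specExp P π * (Real.exp (t * ℓ) - 1) * piNormKron π zpar := (mul_assoc _ _ _).symm

theorem stmt_13 {N m : ℕ} (hm : 1 ≤ m)
    (P : Matrix (Fin N) (Fin N) ℝ) (π : Fin N → ℝ)
    (hP : IsMarkov P) (hreg : IsRegularMC P) (hπ : IsStationaryMC P π)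
    (ℓ t : ℝ) (hℓ : 0 ≤ ℓ) (ht : 0 < t)
    (H : Fin N → Matrix (Fin m) (Fin m) ℂ)
    (hH : ∀ i, spectralNormM (H i) ≤ ℓ)
    (hmean : ∑ i, π i • H i = 0)
    (z zpar zperp : Fin N × Fin m → ℂ)
    (hdecz : z = zpar + zperp) (hzpar : memU π zpar) (hzperp : perpU π zperp)
    (y ypar yperp : Fin N × Fin m → ℂ)
    (hy : y = ((P.map Complex.ofReal) ⊗ₖ (1 : Matrix (Fin m) (Fin m) ℂ))ᵀ *ᵥ
      ((blockDiag' fun i => mexp ((t : ℂ) • H i))ᴴ *ᵥ zpar))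
    (hdecy : y = ypar + yperp) (hypar : memU π ypar) (hyperp : perpU π yperp) :
    piNormKron π yperp ≤ (specExp P π * (Real.exp (t * ℓ) - 1)) * piNormKron π zpar :=
  stmt_13_general P π hP hπ ℓ t hℓ ht H hH zpar hzpar y ypar yperp hy hdecy hypar hyperp
end

section
/- Let P be a regular Markov chain on state space [N] with stationary distribution π. Let m ≥ 1, ℓ ≥ 0, t > 0, and let H_1,…,H_N ∈ ℂ^{m×m} satisfy ‖H_i‖₂ ≤ ℓ for all i and Σ_{i∈[N]} π_i H_i = 0. Let E ∈ ℂ^{Nm×Nm} be the block-diagonal matrix with i-th diagonal block exp(tH_i), and let P̃ := P ⊗ I_m. Then for every z ∈ ℂ^{Nm}, ‖( P̃ᵀ E* z^⊥ )^∥‖_π ≤ (exp(tℓ) − 1)·‖z^⊥‖_π. -/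
open scoped BigOperators Kronecker ComplexOrder
open Matrix

/-!
Write `y = P̃ᵀ E* z^⊥` blockwise, with blocks `y_j, z_j ∈ ℂ^m`. The projection `y^∥` is
`π ⊗ ∑ⱼ y_j`, so its `π`-norm is the Euclidean norm of `∑ⱼ y_j`. As the rows of `P` sum to one,
`∑ⱼ y_j = ∑ⱼ E_jᴴ z_j`, and as the blocks of `z^⊥` sum to zero this equals `∑ⱼ (E_jᴴ - 1) z_j`.
Comparing power series, `‖E_jᴴ - 1‖ = ‖exp (t H_j) - 1‖ ≤ exp (t ℓ) - 1`, and Cauchy–Schwarz with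
weights `π_j` (which sum to one) gives `∑ⱼ ‖z_j‖ ≤ ‖z^⊥‖_π`.
-/

section OperatorNorm

variable {𝕜 : Type*} [RCLike 𝕜] {n : Type*} [Fintype n]

theorem EuclideanSpace.norm_toLp (v : n → 𝕜) :
    ‖WithLp.toLp 2 v‖ = Real.sqrt (∑ i, ‖v i‖ ^ 2) := by
  simp [EuclideanSpace.norm_eq]

variable [DecidableEq n]

theorem norm_toLp_mulVec_le_of_spectralNormM_le {A : Matrix n n 𝕜} {c : ℝ}
    (hA : spectralNormM A ≤ c) (v : n → 𝕜) :
    ‖WithLp.toLp 2 (A *ᵥ v)‖ ≤ c * ‖WithLp.toLp 2 v‖ := by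
  rcases eq_or_ne v 0 with rfl | hv
  · simp
  have hbdd : BddAbove {r : ℝ | ∃ x : n → 𝕜, x ≠ 0 ∧
      r = Real.sqrt (∑ i, ‖(A *ᵥ x) i‖ ^ 2) / Real.sqrt (∑ j, ‖x j‖ ^ 2)} := by
    refine ⟨‖toEuclideanCLM (𝕜 := 𝕜) A‖, ?_⟩
    rintro _ ⟨x, hx, rfl⟩
    rw [← EuclideanSpace.norm_toLp, ← EuclideanSpace.norm_toLp, ← toEuclideanCLM_toLp,
      div_le_iff₀ (norm_pos_iff.2 (by simpa using hx))]
    exact ContinuousLinearMap.le_opNorm _ _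
  have hle := (le_csSup hbdd ⟨v, hv, rfl⟩).trans hA
  rwa [← EuclideanSpace.norm_toLp, ← EuclideanSpace.norm_toLp,
    div_le_iff₀ (norm_pos_iff.2 (by simpa using hv))] at hle

theorem norm_toEuclideanCLM_le_of_spectralNormM_le {A : Matrix n n 𝕜} {c : ℝ} (hc : 0 ≤ c)
    (hA : spectralNormM A ≤ c) : ‖toEuclideanCLM (𝕜 := 𝕜) A‖ ≤ c :=
  ContinuousLinearMap.opNorm_le_bound _ hc fun x => by
    obtain ⟨v⟩ := x
    rw [toEuclideanCLM_toLp]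
    exact norm_toLp_mulVec_le_of_spectralNormM_le hA v

end OperatorNorm

theorem NormedSpace.norm_exp_sub_one_le {𝕂 𝔸 : Type*} [RCLike 𝕂] [NormedRing 𝔸]
    [NormedAlgebra 𝕂 𝔸] [CompleteSpace 𝔸] (a : 𝔸) :
    ‖NormedSpace.exp a - 1‖ ≤ Real.exp ‖a‖ - 1 := by
  have hs := NormedSpace.norm_expSeries_summable' (𝕂 := 𝕂) a
  have hr := Real.summable_pow_div_factorial ‖a‖
  have hexp : NormedSpace.exp a - 1 = ∑' k : ℕ, ((k + 1).factorial⁻¹ : 𝕂) • a ^ (k + 1) := by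
    rw [congrFun (NormedSpace.exp_eq_tsum 𝕂) a, hs.of_norm.tsum_eq_zero_add]
    simp
  have hreal : Real.exp ‖a‖ - 1 = ∑' k : ℕ, ‖a‖ ^ (k + 1) / (k + 1).factorial := by
    rw [Real.exp_eq_exp_ℝ, congrFun NormedSpace.exp_eq_tsum_div ‖a‖, hr.tsum_eq_zero_add]
    simp
  have hs' := (summable_nat_add_iff 1).2 hs
  rw [hexp, hreal]
  refine (norm_tsum_le_tsum_norm hs').trans
    (hs'.tsum_le_tsum (fun k => ?_) ((summable_nat_add_iff 1).2 hr))
  rw [norm_smul, norm_inv, RCLike.norm_natCast, div_eq_inv_mul]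
  gcongr
  exact norm_pow_le' a k.succ_pos

section MatrixExponential

variable {n : Type*} [Fintype n] [DecidableEq n]

theorem toEuclideanCLM_mexp (A : Matrix n n ℂ) :
    toEuclideanCLM (𝕜 := ℂ) (mexp A) = NormedSpace.exp (toEuclideanCLM (𝕜 := ℂ) A) := by
  let e := (toEuclideanCLM (𝕜 := ℂ) (n := n)).toAlgEquiv.toLinearEquiv.toContinuousLinearEquiv
  rw [congrFun (NormedSpace.exp_eq_tsum ℂ), mexp]
  calc e (∑' k : ℕ, (k.factorial⁻¹ : ℂ) • A ^ k) = ∑' k : ℕ, e ((k.factorial⁻¹ : ℂ) • A ^ k) :=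
        e.map_tsum
    _ = _ := by simp [e]

theorem norm_toEuclideanCLM_conjTranspose_mexp_sub_one_le {A : Matrix n n ℂ} {c : ℝ}
    (hA : ‖toEuclideanCLM (𝕜 := ℂ) (n := n) A‖ ≤ c) :
    ‖toEuclideanCLM (𝕜 := ℂ) (n := n) ((mexp A)ᴴ - 1)‖ ≤ Real.exp c - 1 := by
  rw [← star_eq_conjTranspose, ← star_one, ← star_sub, map_star, map_sub, map_one,
    ContinuousLinearMap.star_eq_adjoint, LinearIsometryEquiv.norm_map, toEuclideanCLM_mexp]
  exact (NormedSpace.norm_exp_sub_one_le (𝕂 := ℂ) _).trans (by gcongr)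

theorem norm_toEuclideanCLM_conjTranspose_mexp_smul_sub_one_le {A : Matrix n n ℂ} {t ℓ : ℝ}
    (ht : 0 ≤ t) (hℓ : 0 ≤ ℓ) (hA : spectralNormM A ≤ ℓ) :
    ‖toEuclideanCLM (𝕜 := ℂ) (n := n) ((mexp ((t : ℂ) • A))ᴴ - 1)‖ ≤ Real.exp (t * ℓ) - 1 := by
  refine norm_toEuclideanCLM_conjTranspose_mexp_sub_one_le ?_
  rw [map_smul, norm_smul, Complex.norm_real, Real.norm_of_nonneg ht]
  exact mul_le_mul_of_nonneg_left (norm_toEuclideanCLM_le_of_spectralNormM_le hℓ hA) ht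

end MatrixExponential

section Blocks

variable {ι κ : Type*}

def block (x : ι × κ → ℂ) (j : ι) : EuclideanSpace ℂ κ :=
  WithLp.toLp 2 fun k => x (j, k)

theorem block_add (x y : ι × κ → ℂ) (j : ι) : block (x + y) j = block x j + block y j := rfl

theorem conjTranspose_blockDiag' [DecidableEq ι] (M : ι → Matrix κ κ ℂ) :
    (_root_.blockDiag' M)ᴴ = _root_.blockDiag' fun i => (M i)ᴴ := by
  ext p q
  by_cases h : p.1 = q.1 <;> simp [_root_.blockDiag', h, eq_comm]

variable [Fintype ι] [Fintype κ] [DecidableEq κ]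

theorem block_blockDiag'_mulVec [DecidableEq ι] (M : ι → Matrix κ κ ℂ) (x : ι × κ → ℂ)
    (j : ι) :
    block (_root_.blockDiag' M *ᵥ x) j = toEuclideanCLM (𝕜 := ℂ) (M j) (block x j) := by
  rw [block, block, toEuclideanCLM_toLp]
  congr 1
  ext k
  simp [_root_.blockDiag', mulVec, dotProduct, Fintype.sum_prod_type, ite_mul]

theorem sum_block_kroneckerMap_transpose_mulVec {P : Matrix ι ι ℝ}
    (hP : ∀ i, ∑ j, P i j = 1) (x : ι × κ → ℂ) :
    ∑ i, block (((P.map Complex.ofReal) ⊗ₖ (1 : Matrix κ κ ℂ))ᵀ *ᵥ x) i = ∑ j, block x j := by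
  ext k
  simp [block, mulVec, dotProduct, Fintype.sum_prod_type, one_apply, Finset.sum_comm (γ := ι),
    ← Finset.sum_mul, ← Complex.ofReal_sum, hP]

end Blocks

section PiNorm

variable {N m : ℕ} {π : Fin N → ℝ}

theorem piNormKron_eq_sqrt_sum_norm_block_sq (x : Fin N × Fin m → ℂ) :
    piNormKron π x = Real.sqrt (∑ j, ‖block x j‖ ^ 2 / π j) := by
  simp [piNormKron, block, EuclideanSpace.norm_sq_eq, Fintype.sum_prod_type, Finset.sum_div]

theorem sum_block_eq_zero_of_perpU (hπ : ∀ j, π j ≠ 0) {x : Fin N × Fin m → ℂ}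
    (hx : perpU π x) : ∑ j, block x j = 0 := by
  ext k
  have := hx (Pi.single k 1)
  simpa [piInnerKron, block, Fintype.sum_prod_type, Pi.single_apply, apply_ite (starRingEnd ℂ),
    ite_mul, ite_div, hπ] using this

theorem sum_block_of_memU (hπ : ∑ j, π j = 1) {x : Fin N × Fin m → ℂ} {w : Fin m → ℂ}
    (hx : ∀ p, x p = π p.1 * w p.2) : ∑ j, block x j = WithLp.toLp 2 w := by
  ext k
  simp [block, hx, ← Finset.sum_mul, ← Complex.ofReal_sum, hπ]

theorem piNormKron_of_memU (hπpos : ∀ j, 0 < π j) (hπ : ∑ j, π j = 1)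
    {x : Fin N × Fin m → ℂ} {w : Fin m → ℂ} (hx : ∀ p, x p = π p.1 * w p.2) :
    piNormKron π x = ‖WithLp.toLp 2 w‖ := by
  have hblock : ∀ j, block x j = (π j : ℂ) • WithLp.toLp 2 w := fun j => by
    ext k; simp [block, hx]
  simp_rw [piNormKron_eq_sqrt_sum_norm_block_sq, hblock, norm_smul, Complex.norm_real,
    Real.norm_of_nonneg (hπpos _).le]
  have hterm : ∀ j, (π j * ‖WithLp.toLp 2 w‖) ^ 2 / π j = π j * ‖WithLp.toLp 2 w‖ ^ 2 :=
    fun j => by field_simp [(hπpos j).ne']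
  rw [Finset.sum_congr rfl fun j _ => hterm j, ← Finset.sum_mul, hπ, one_mul,
    Real.sqrt_sq (norm_nonneg _)]

theorem sum_norm_block_le_piNormKron (hπpos : ∀ j, 0 < π j) (hπ : ∑ j, π j = 1)
    (x : Fin N × Fin m → ℂ) : ∑ j, ‖block x j‖ ≤ piNormKron π x := by
  calc ∑ j, ‖block x j‖ = ∑ j, Real.sqrt (π j) * Real.sqrt (‖block x j‖ ^ 2 / π j) := by
        refine Finset.sum_congr rfl fun j _ => ?_
        rw [← Real.sqrt_mul (hπpos j).le, mul_div_cancel₀ _ (hπpos j).ne',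
          Real.sqrt_sq (norm_nonneg _)]
    _ ≤ Real.sqrt (∑ j, π j) * Real.sqrt (∑ j, ‖block x j‖ ^ 2 / π j) :=
        Real.sum_sqrt_mul_sqrt_le _ (fun j => (hπpos j).le)
          fun j => div_nonneg (sq_nonneg _) (hπpos j).le
    _ = piNormKron π x := by
        rw [hπ, Real.sqrt_one, one_mul, piNormKron_eq_sqrt_sum_norm_block_sq]

theorem piNormKron_eq_norm_sum_block_of_add (hπpos : ∀ j, 0 < π j) (hπ : ∑ j, π j = 1)
    {y ypar yperp : Fin N × Fin m → ℂ} (hy : y = ypar + yperp) (hpar : memU π ypar)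
    (hperp : perpU π yperp) : piNormKron π ypar = ‖∑ j, block y j‖ := by
  obtain ⟨w, hw⟩ := hpar
  rw [piNormKron_of_memU hπpos hπ hw, hy]
  simp only [block_add, Finset.sum_add_distrib, sum_block_of_memU hπ hw,
    sum_block_eq_zero_of_perpU (fun j => (hπpos j).ne') hperp, add_zero]

end PiNorm

theorem stmt_14_general {N m : ℕ}
    (P : Matrix (Fin N) (Fin N) ℝ) (π : Fin N → ℝ)
    (hP : IsMarkov P) (hπ : IsStationaryMC P π)
    (ℓ t : ℝ) (hℓ : 0 ≤ ℓ) (ht : 0 < t)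
    (H : Fin N → Matrix (Fin m) (Fin m) ℂ)
    (hH : ∀ i, spectralNormM (H i) ≤ ℓ)
    (zperp : Fin N × Fin m → ℂ)
    (hzperp : perpU π zperp)
    (y ypar yperp : Fin N × Fin m → ℂ)
    (hy : y = ((P.map Complex.ofReal) ⊗ₖ (1 : Matrix (Fin m) (Fin m) ℂ))ᵀ *ᵥ
      ((blockDiag' fun i => mexp ((t : ℂ) • H i))ᴴ *ᵥ zperp))
    (hdecy : y = ypar + yperp) (hypar : memU π ypar) (hyperp : perpU π yperp) :
    piNormKron π ypar ≤ (Real.exp (t * ℓ) - 1) * piNormKron π zperp := by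
  obtain ⟨-, hProw⟩ := hP
  obtain ⟨hπpos, hπsum, -⟩ := hπ
  set c := Real.exp (t * ℓ) - 1
  set D : Fin N → EuclideanSpace ℂ (Fin m) →L[ℂ] EuclideanSpace ℂ (Fin m) :=
    fun j => toEuclideanCLM (𝕜 := ℂ) ((mexp ((t : ℂ) • H j))ᴴ - 1)
  have hD : ∀ j, ‖D j‖ ≤ c := fun j =>
    norm_toEuclideanCLM_conjTranspose_mexp_smul_sub_one_le ht.le hℓ (hH j)
  have hsum : ∑ j, block y j = ∑ j, D j (block zperp j) := by
    rw [hy, sum_block_kroneckerMap_transpose_mulVec hProw, conjTranspose_blockDiag']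
    simp only [D, block_blockDiag'_mulVec, map_sub, map_one, _root_.sub_apply,
      one_apply_eq_self, Finset.sum_sub_distrib,
      sum_block_eq_zero_of_perpU (fun j => (hπpos j).ne') hzperp, sub_zero]
  rw [piNormKron_eq_norm_sum_block_of_add hπpos hπsum hdecy hypar hyperp, hsum]
  calc ‖∑ j, D j (block zperp j)‖ ≤ ∑ j, ‖D j (block zperp j)‖ := norm_sum_le _ _
    _ ≤ ∑ j, c * ‖block zperp j‖ := Finset.sum_le_sum fun j _ =>
        ((D j).le_opNorm _).trans (mul_le_mul_of_nonneg_right (hD j) (norm_nonneg _))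
    _ = c * ∑ j, ‖block zperp j‖ := (Finset.mul_sum _ _ _).symm
    _ ≤ c * piNormKron π zperp := mul_le_mul_of_nonneg_left
        (sum_norm_block_le_piNormKron hπpos hπsum zperp)
        (sub_nonneg.2 (Real.one_le_exp (mul_nonneg ht.le hℓ)))

theorem stmt_14 {N m : ℕ} (hm : 1 ≤ m)
    (P : Matrix (Fin N) (Fin N) ℝ) (π : Fin N → ℝ)
    (hP : IsMarkov P) (hreg : IsRegularMC P) (hπ : IsStationaryMC P π)
    (ℓ t : ℝ) (hℓ : 0 ≤ ℓ) (ht : 0 < t)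
    (H : Fin N → Matrix (Fin m) (Fin m) ℂ)
    (hH : ∀ i, spectralNormM (H i) ≤ ℓ)
    (hmean : ∑ i, π i • H i = 0)
    (z zpar zperp : Fin N × Fin m → ℂ)
    (hdecz : z = zpar + zperp) (hzpar : memU π zpar) (hzperp : perpU π zperp)
    (y ypar yperp : Fin N × Fin m → ℂ)
    (hy : y = ((P.map Complex.ofReal) ⊗ₖ (1 : Matrix (Fin m) (Fin m) ℂ))ᵀ *ᵥ
      ((blockDiag' fun i => mexp ((t : ℂ) • H i))ᴴ *ᵥ zperp))
    (hdecy : y = ypar + yperp) (hypar : memU π ypar) (hyperp : perpU π yperp) :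
    piNormKron π ypar ≤ (Real.exp (t * ℓ) - 1) * piNormKron π zperp :=
  stmt_14_general P π hP hπ ℓ t hℓ ht H hH zperp hzperp y ypar yperp hy hdecy hypar hyperp
end
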